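/- Let H be a Hopf algebra and F ∈ H⊗H an invertible element that is H-invariant (commutes with the image of Δ). Then ∂F = (1⊗F)(id⊗Δ)(F)(Δ⊗id)(F⁻¹)(F⁻¹⊗1) satisfies ∂(∂F) = 1 in H^{⊗4}, where ∂ on invertible elements of H^{⊗3} is defined by ∂Φ = Φ₂₃₄ · Φ_{1(23)4} · Φ₁₂₃ · (Φ⁻¹)_{(12)34} · (Φ⁻¹)_{12(34)} (leg notation). -/

import Mathlib

/-!
Write `fᵢⱼ = δ'ⱼ (δᵢ F)` for the ten composite cofaces with `i < j`. The cosimplicial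
identities `δ'ⱼ ∘ δᵢ = δ'ᵢ ∘ δⱼ₋₁` pair off the twenty factors of `∂(∂F)`, each such element
occurring once and its inverse once. Invariance of `F` makes `F₂₃ = f₀₄`, `F₁₂ = f₃₄` and
`F₃₄ = f₀₁` commute with everything obtained by applying `Δ` to the leg pair they occupy, that is
with the images of `δ'₂`, `δ'₁` and `δ'₃`; these commutations let the paired factors meet and
cancel in the group of units of `H^{⊗4}`.
-/
open TensorProduct

section

variable (k H : Type*) [Field k] [Ring H] [HopfAlgebra k H]

/-- The coboundary of a 2-cochain `F ∈ H ⊗ H` with (two-sided) inverse `Finv`: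
`∂F = (1 ⊗ F)·(id ⊗ Δ)(F)·(Δ ⊗ id)(F⁻¹)·(F⁻¹ ⊗ 1) ∈ H^{⊗3}`. -/
noncomputable def del2 (F Finv : H ⊗[k] H) : H ⊗[k] (H ⊗[k] H) :=
  ((1 : H) ⊗ₜ[k] F) *
    (TensorProduct.map LinearMap.id (Coalgebra.comul (R := k)) F) *
    ((TensorProduct.assoc k H H H)
      (TensorProduct.map (Coalgebra.comul (R := k)) LinearMap.id Finv)) *
    ((TensorProduct.assoc k H H H) (Finv ⊗ₜ[k] (1 : H)))

/-- The coboundary of a 3-cochain `Φ ∈ H^{⊗3}` with (two-sided) inverse `Φinv`,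
in leg notation: `∂Φ = Φ₂₃₄ · Φ_{1(23)4} · Φ₁₂₃ · (Φ⁻¹)_{(12)34} · (Φ⁻¹)_{12(34)}`,
an element of `H^{⊗4}` (right-associated). -/
noncomputable def del3 (Φ Φinv : H ⊗[k] (H ⊗[k] H)) : H ⊗[k] (H ⊗[k] (H ⊗[k] H)) :=
  ((1 : H) ⊗ₜ[k] Φ) *
    (TensorProduct.map LinearMap.id
      ((TensorProduct.assoc k H H H).toLinearMap ∘ₗ
        TensorProduct.map (Coalgebra.comul (R := k)) LinearMap.id) Φ) *
    (TensorProduct.map LinearMap.id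
      (TensorProduct.map LinearMap.id ((TensorProduct.mk k H H).flip (1 : H))) Φ) *
    ((TensorProduct.assoc k H H (H ⊗[k] H))
      (TensorProduct.map (Coalgebra.comul (R := k)) LinearMap.id Φinv)) *
    (TensorProduct.map LinearMap.id
      (TensorProduct.map LinearMap.id (Coalgebra.comul (R := k))) Φinv)

/- With `fᵢⱼ = δ'ⱼ (δᵢ F)` and `Aⱼ = δ'ⱼ (∂F)`, the hypotheses `h₀`, …, `h₄` are the cosimplicial
identities. -/
theorem mul_mul_mul_inv_mul_inv_eq_one_of_commute {G : Type*} [Group G]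
    {f₀₁ f₀₂ f₀₃ f₀₄ f₁₂ f₁₃ f₁₄ f₂₃ f₂₄ f₃₄ A₀ A₁ A₂ A₃ A₄ : G}
    (h₀ : A₀ = f₀₁ * f₀₃ * f₀₂⁻¹ * f₀₄⁻¹) (h₁ : A₁ = f₀₁ * f₁₃ * f₁₂⁻¹ * f₁₄⁻¹)
    (h₂ : A₂ = f₀₂ * f₂₃ * f₁₂⁻¹ * f₂₄⁻¹) (h₃ : A₃ = f₀₃ * f₂₃ * f₁₃⁻¹ * f₃₄⁻¹)
    (h₄ : A₄ = f₀₄ * f₂₄ * f₁₄⁻¹ * f₃₄⁻¹)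
    (c₂ : Commute f₀₄ A₂) (c₁ : Commute f₃₄ A₁) (c₃ : Commute f₀₁ A₃) (c : Commute f₀₁ f₃₄) :
    A₀ * A₂ * A₄ * A₁⁻¹ * A₃⁻¹ = 1 := by
  have c₁' : Commute f₃₄ (f₀₁⁻¹ * A₁) := c.symm.inv_right.mul_right c₁
  rw [mul_inv_eq_one, mul_inv_eq_iff_eq_mul]
  calc A₀ * A₂ * A₄ = f₀₁ * f₀₃ * f₀₂⁻¹ * (f₀₄⁻¹ * A₂ * f₀₄) * f₂₄ * f₁₄⁻¹ * f₃₄⁻¹ := by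
        rw [h₀, h₄]; group
    _ = f₀₁ * f₀₃ * f₂₃ * f₁₃⁻¹ * f₃₄⁻¹ * (f₃₄ * (f₀₁⁻¹ * A₁) * f₃₄⁻¹) := by
        rw [c₂.inv_mul_cancel, h₂, h₁]; group
    _ = f₀₁ * A₃ * f₀₁⁻¹ * A₁ := by
        rw [c₁'.mul_inv_cancel, h₃]; group
    _ = A₃ * A₁ := by rw [c₃.mul_inv_cancel]

namespace Algebra.TensorProduct

variable {R A B C : Type*} [CommSemiring R] [Semiring A] [Algebra R A] [Semiring B] [Algebra R B]
  [Semiring C] [Algebra R C]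

theorem commute_one_tmul_map {f : B →ₐ[R] C} {u : C} (hu : ∀ b, Commute u (f b))
    (y : A ⊗[R] B) :
    Commute ((1 : A) ⊗ₜ[R] u) (map (AlgHom.id R A) f y) := by
  induction y using TensorProduct.induction_on with
  | zero => simp
  | tmul a b => simpa using (Commute.one_left a).tmul (hu b)
  | add x y hx hy => simpa only [map_add] using hx.add_right hy

theorem commute_tmul_one_map {f : B →ₐ[R] C} {u : C} (hu : ∀ b, Commute u (f b))
    (y : B ⊗[R] A) :
    Commute (u ⊗ₜ[R] (1 : A)) (map f (AlgHom.id R A) y) := by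
  induction y using TensorProduct.induction_on with
  | zero => simp
  | tmul b a => simpa using (hu b).tmul (Commute.one_left a)
  | add x y hx hy => simpa only [map_add] using hx.add_right hy

end Algebra.TensorProduct

namespace Cobar

open Algebra.TensorProduct (includeLeft includeRight commute_one_tmul_map commute_tmul_one_map)

variable {R A : Type*} [CommSemiring R] [Semiring A] [Bialgebra R A]

/- The coface maps `A^{⊗2} → A^{⊗3}` and `A^{⊗3} → A^{⊗4}` of the cobar complex. In the leg
notation of `del3`: `δ'₀ Φ = Φ₂₃₄`, `δ'₁ Φ = Φ_{(12)34}`, `δ'₂ Φ = Φ_{1(23)4}`,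
`δ'₃ Φ = Φ_{12(34)}`, `δ'₄ Φ = Φ₁₂₃`. -/
noncomputable def δ₀ : A ⊗[R] A →ₐ[R] A ⊗[R] (A ⊗[R] A) := includeRight
noncomputable def δ₁ : A ⊗[R] A →ₐ[R] A ⊗[R] (A ⊗[R] A) :=
  (Algebra.TensorProduct.assoc R R R A A A).toAlgHom.comp
    (Algebra.TensorProduct.map (Bialgebra.comulAlgHom R A) (AlgHom.id R A))
noncomputable def δ₂ : A ⊗[R] A →ₐ[R] A ⊗[R] (A ⊗[R] A) :=
  Algebra.TensorProduct.map (AlgHom.id R A) (Bialgebra.comulAlgHom R A)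
noncomputable def δ₃ : A ⊗[R] A →ₐ[R] A ⊗[R] (A ⊗[R] A) :=
  Algebra.TensorProduct.map (AlgHom.id R A) includeLeft

noncomputable def δ'₀ : A ⊗[R] (A ⊗[R] A) →ₐ[R] A ⊗[R] (A ⊗[R] (A ⊗[R] A)) := includeRight
noncomputable def δ'₁ : A ⊗[R] (A ⊗[R] A) →ₐ[R] A ⊗[R] (A ⊗[R] (A ⊗[R] A)) :=
  (Algebra.TensorProduct.assoc R R R A A (A ⊗[R] A)).toAlgHom.comp
    (Algebra.TensorProduct.map (Bialgebra.comulAlgHom R A) (AlgHom.id R (A ⊗[R] A)))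
noncomputable def δ'₂ : A ⊗[R] (A ⊗[R] A) →ₐ[R] A ⊗[R] (A ⊗[R] (A ⊗[R] A)) :=
  Algebra.TensorProduct.map (AlgHom.id R A) δ₁
noncomputable def δ'₃ : A ⊗[R] (A ⊗[R] A) →ₐ[R] A ⊗[R] (A ⊗[R] (A ⊗[R] A)) :=
  Algebra.TensorProduct.map (AlgHom.id R A) δ₂
noncomputable def δ'₄ : A ⊗[R] (A ⊗[R] A) →ₐ[R] A ⊗[R] (A ⊗[R] (A ⊗[R] A)) :=
  Algebra.TensorProduct.map (AlgHom.id R A) δ₃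

@[simp] theorem δ₀_apply (x : A ⊗[R] A) : δ₀ x = 1 ⊗ₜ x := rfl
@[simp] theorem δ₁_tmul (a b : A) : δ₁ (a ⊗ₜ[R] b) =
    Algebra.TensorProduct.assoc R R R A A A (Coalgebra.comul a ⊗ₜ b) := by
  simp [δ₁]
@[simp] theorem δ₂_tmul (a b : A) : δ₂ (a ⊗ₜ[R] b) = a ⊗ₜ Coalgebra.comul b := by
  simp [δ₂]
@[simp] theorem δ₃_tmul (a b : A) : δ₃ (a ⊗ₜ[R] b) = a ⊗ₜ (b ⊗ₜ 1) := by
  simp [δ₃]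
@[simp] theorem δ'₀_apply (x : A ⊗[R] (A ⊗[R] A)) : δ'₀ x = 1 ⊗ₜ x := rfl
@[simp] theorem δ'₁_tmul (a : A) (y : A ⊗[R] A) : δ'₁ (a ⊗ₜ[R] y) =
    Algebra.TensorProduct.assoc R R R A A (A ⊗[R] A) (Coalgebra.comul a ⊗ₜ y) := by
  simp [δ'₁]
@[simp] theorem δ'₂_tmul (a : A) (y : A ⊗[R] A) : δ'₂ (a ⊗ₜ[R] y) = a ⊗ₜ δ₁ y := by
  simp [δ'₂]
@[simp] theorem δ'₃_tmul (a : A) (y : A ⊗[R] A) : δ'₃ (a ⊗ₜ[R] y) = a ⊗ₜ δ₂ y := by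
  simp [δ'₃]
@[simp] theorem δ'₄_tmul (a : A) (y : A ⊗[R] A) : δ'₄ (a ⊗ₜ[R] y) = a ⊗ₜ δ₃ y := by
  simp [δ'₄]

theorem δ₃_apply (x : A ⊗[R] A) :
    δ₃ x = Algebra.TensorProduct.assoc R R R A A A (x ⊗ₜ 1) := by
  induction x using TensorProduct.induction_on with
  | zero => simp
  | tmul a b => simp
  | add x y hx hy => simp only [map_add, hx, hy, TensorProduct.add_tmul]

theorem δ₁_tmul_one (a : A) : δ₁ (a ⊗ₜ[R] 1) = δ₃ (Coalgebra.comul a) := by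
  simp [δ₃_apply]

theorem δ₁_comul (a : A) : δ₁ (Coalgebra.comul (R := R) a) = δ₂ (Coalgebra.comul a) :=
  Coalgebra.coassoc_apply a

theorem δ'₄_δ₃_apply (x : A ⊗[R] A) :
    δ'₄ (δ₃ x) = Algebra.TensorProduct.assoc R R R A A (A ⊗[R] A) (x ⊗ₜ 1) := by
  induction x using TensorProduct.induction_on with
  | zero => simp
  | tmul a b => simp [Algebra.TensorProduct.one_def]
  | add x y hx hy => simp only [map_add, hx, hy, TensorProduct.add_tmul]

section CosimplicialIdentities

attribute [local simp] Algebra.TensorProduct.one_def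

theorem δ'₁_comp_δ₀ : (δ'₁ : A ⊗[R] (A ⊗[R] A) →ₐ[R] _).comp δ₀ = δ'₀.comp δ₀ := by
  ext a <;> simp

theorem δ'₂_comp_δ₀ : (δ'₂ : A ⊗[R] (A ⊗[R] A) →ₐ[R] _).comp δ₀ = δ'₀.comp δ₁ := rfl
theorem δ'₃_comp_δ₀ : (δ'₃ : A ⊗[R] (A ⊗[R] A) →ₐ[R] _).comp δ₀ = δ'₀.comp δ₂ := rfl
theorem δ'₄_comp_δ₀ : (δ'₄ : A ⊗[R] (A ⊗[R] A) →ₐ[R] _).comp δ₀ = δ'₀.comp δ₃ := rfl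

theorem δ'₄_comp_δ₃ : (δ'₄ : A ⊗[R] (A ⊗[R] A) →ₐ[R] _).comp δ₃ = δ'₃.comp δ₃ := by
  ext a <;> simp

theorem δ'₃_comp_δ₂ : (δ'₃ : A ⊗[R] (A ⊗[R] A) →ₐ[R] _).comp δ₂ = δ'₂.comp δ₂ := by
  ext a <;> simp [δ₁_comul]

theorem δ'₄_comp_δ₂ : (δ'₄ : A ⊗[R] (A ⊗[R] A) →ₐ[R] _).comp δ₂ = δ'₂.comp δ₃ := by
  ext a <;> simp [δ₃_apply]

theorem δ'₄_comp_δ₁ : (δ'₄ : A ⊗[R] (A ⊗[R] A) →ₐ[R] _).comp δ₁ = δ'₁.comp δ₃ := by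
  ext a
  · simp only [AlgHom.comp_apply, Algebra.TensorProduct.includeLeft_apply, δ₁_tmul, δ₃_tmul,
      δ'₁_tmul]
    induction Coalgebra.comul (R := R) a using TensorProduct.induction_on <;>
      simp_all [TensorProduct.add_tmul]
  · simp

theorem δ'₃_comp_δ₁ : (δ'₃ : A ⊗[R] (A ⊗[R] A) →ₐ[R] _).comp δ₁ = δ'₁.comp δ₂ := by
  ext a
  · simp only [AlgHom.comp_apply, Algebra.TensorProduct.includeLeft_apply, δ₁_tmul, δ₂_tmul,
      δ'₁_tmul]
    induction Coalgebra.comul (R := R) a using TensorProduct.induction_on <;>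
      simp_all [TensorProduct.add_tmul]
  · simp

theorem δ'₂_comp_δ₁ : (δ'₂ : A ⊗[R] (A ⊗[R] A) →ₐ[R] _).comp δ₁ = δ'₁.comp δ₁ := by
  ext a
  · -- on `a ⊗ 1` both sides factor through `δ'₄`, where coassociativity `δ₁ ∘ Δ = δ₂ ∘ Δ` applies
    simp only [AlgHom.comp_apply, Algebra.TensorProduct.includeLeft_apply, δ₁_tmul_one]
    rw [← AlgHom.comp_apply δ'₂, ← δ'₄_comp_δ₂, ← AlgHom.comp_apply δ'₁, ← δ'₄_comp_δ₁]
    simp [δ₁_comul]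
  · simp

end CosimplicialIdentities

section Invariance

variable {W : A ⊗[R] A} (hW : ∀ a : A, Commute W (Coalgebra.comul a))
include hW

theorem commute_δ₃_δ₁ (z : A ⊗[R] A) : Commute (δ₃ W) (δ₁ z) := by
  rw [δ₃_apply]
  exact (commute_tmul_one_map hW z).map _

theorem commute_δ'₄_δ₀_δ'₂ (y : A ⊗[R] (A ⊗[R] A)) : Commute (δ'₄ (δ₀ W)) (δ'₂ y) :=
  commute_one_tmul_map (commute_δ₃_δ₁ hW) y

theorem commute_δ'₄_δ₃_δ'₁ (y : A ⊗[R] (A ⊗[R] A)) : Commute (δ'₄ (δ₃ W)) (δ'₁ y) := by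
  rw [δ'₄_δ₃_apply]
  exact (commute_tmul_one_map hW y).map _

theorem commute_δ'₁_δ₀_δ'₃ (y : A ⊗[R] (A ⊗[R] A)) : Commute (δ'₁ (δ₀ W)) (δ'₃ y) := by
  rw [← AlgHom.comp_apply, δ'₁_comp_δ₀]
  exact commute_one_tmul_map (commute_one_tmul_map hW) y

end Invariance

noncomputable def coboundary₂ (F : (A ⊗[R] A)ˣ) : (A ⊗[R] (A ⊗[R] A))ˣ :=
  Units.map δ₀.toMonoidHom F * Units.map δ₂.toMonoidHom F * (Units.map δ₁.toMonoidHom F)⁻¹ *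
    (Units.map δ₃.toMonoidHom F)⁻¹

noncomputable def coboundary₃ (Φ : (A ⊗[R] (A ⊗[R] A))ˣ) : (A ⊗[R] (A ⊗[R] (A ⊗[R] A)))ˣ :=
  Units.map δ'₀.toMonoidHom Φ * Units.map δ'₂.toMonoidHom Φ * Units.map δ'₄.toMonoidHom Φ *
    (Units.map δ'₁.toMonoidHom Φ)⁻¹ * (Units.map δ'₃.toMonoidHom Φ)⁻¹

theorem coboundary₃_coboundary₂ (F : (A ⊗[R] A)ˣ)
    (hF : ∀ a : A, Commute (F : A ⊗[R] A) (Coalgebra.comul a)) :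
    coboundary₃ (coboundary₂ F) = 1 := by
  let f (d : A ⊗[R] A →ₐ[R] A ⊗[R] (A ⊗[R] A))
      (d' : A ⊗[R] (A ⊗[R] A) →ₐ[R] A ⊗[R] (A ⊗[R] (A ⊗[R] A))) :=
    Units.map d'.toMonoidHom (Units.map d.toMonoidHom F)
  have face_eq {d e d' e'} (h : AlgHom.comp d' d = AlgHom.comp e' e) : f d d' = f e e' :=
    Units.ext (AlgHom.congr_fun h F)
  have expand (d' : A ⊗[R] (A ⊗[R] A) →ₐ[R] A ⊗[R] (A ⊗[R] (A ⊗[R] A))) :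
      Units.map d'.toMonoidHom (coboundary₂ F) = f δ₀ d' * f δ₂ d' * (f δ₁ d')⁻¹ * (f δ₃ d')⁻¹ := by
    simp only [coboundary₂, map_mul, map_inv, f]
  refine mul_mul_mul_inv_mul_inv_eq_one_of_commute (f₀₁ := f δ₀ δ'₁) (f₀₂ := f δ₀ δ'₂)
    (f₀₃ := f δ₀ δ'₃) (f₀₄ := f δ₀ δ'₄) (f₁₂ := f δ₁ δ'₂) (f₁₃ := f δ₁ δ'₃) (f₁₄ := f δ₁ δ'₄)
    (f₂₃ := f δ₂ δ'₃) (f₂₄ := f δ₂ δ'₄) (f₃₄ := f δ₃ δ'₄) ?_ ?_ ?_ ?_ ?_ ?_ ?_ ?_ ?_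
  · rw [expand, ← face_eq δ'₁_comp_δ₀, ← face_eq δ'₂_comp_δ₀, ← face_eq δ'₃_comp_δ₀,
      ← face_eq δ'₄_comp_δ₀]
  · rw [expand, ← face_eq δ'₂_comp_δ₁, ← face_eq δ'₃_comp_δ₁, ← face_eq δ'₄_comp_δ₁]
  · rw [expand, ← face_eq δ'₃_comp_δ₂, ← face_eq δ'₄_comp_δ₂]
  · rw [expand, ← face_eq δ'₄_comp_δ₃]
  · rw [expand]
  · exact Commute.units_val_iff.mp (commute_δ'₄_δ₀_δ'₂ hF _)
  · exact Commute.units_val_iff.mp (commute_δ'₄_δ₃_δ'₁ hF _)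
  · exact Commute.units_val_iff.mp (commute_δ'₁_δ₀_δ'₃ hF _)
  · exact Commute.units_val_iff.mp (commute_δ'₄_δ₃_δ'₁ hF _).symm

theorem val_coboundary₂ (F : (H ⊗[k] H)ˣ) :
    (coboundary₂ F : H ⊗[k] (H ⊗[k] H)) = del2 k H F ↑F⁻¹ :=
  congrArg (_ * ·) (δ₃_apply _)

theorem val_coboundary₃ (Φ : (H ⊗[k] (H ⊗[k] H))ˣ) :
    (coboundary₃ Φ : H ⊗[k] (H ⊗[k] (H ⊗[k] H))) = del3 k H Φ ↑Φ⁻¹ :=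
  rfl

end Cobar

/-- Let `F ∈ H ⊗ H` be invertible and `H`-invariant (it commutes with the image of
`Δ`).  Then `∂(∂F) = 1` in `H^{⊗4}`, where `∂F` and `∂` of a 3-cochain are
computed with the respective (two-sided) inverses. -/
theorem del_squared_of_invariant (F Finv : H ⊗[k] H)
    (hinv₁ : F * Finv = 1) (hinv₂ : Finv * F = 1)
    (hinvariant : ∀ a : H, F * Coalgebra.comul (R := k) a = Coalgebra.comul (R := k) a * F) :
    ∀ Φinv : H ⊗[k] (H ⊗[k] H),
      del2 k H F Finv * Φinv = 1 → Φinv * del2 k H F Finv = 1 →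
        del3 k H (del2 k H F Finv) Φinv = 1 := by
  intro Φinv hΦ₁ hΦ₂
  let F' : (H ⊗[k] H)ˣ := ⟨F, Finv, hinv₁, hinv₂⟩
  have hΦ : (⟨del2 k H F Finv, Φinv, hΦ₁, hΦ₂⟩ : (H ⊗[k] (H ⊗[k] H))ˣ) = Cobar.coboundary₂ F' :=
    Units.ext (Cobar.val_coboundary₂ k H F').symm
  have h := congrArg Units.val (Cobar.coboundary₃_coboundary₂ F' hinvariant)
  rwa [← hΦ, Cobar.val_coboundary₃] at h

end
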